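/- arXiv:2307.10829 — 4 statements merged into one kernel-verified Lean document; each statement's English description precedes it below -/
import Mathlib

section
/- Let V be a real vector space and let Δf, Δb : ℕ → V be arbitrary functions (representing forward and backward DDIM updates). Fix γ ∈ [0,1] and N ≥ 2. Define a sequence z : ℕ → V (indexed backwards from N) by z(N) arbitrary, z(N-1) = z(N) + Δf(N), and for i ≤ N-1, z(i-1) = z(i+1) - (1-γ)(z(i+1) - z(i)) - γ·Δb(i) + Δf(i), where Δf(j) denotes the forward update over [t_j, t_{j-1}] and Δb(j) the backward update over [t_j, t_{j+1}]. Then for every i ≤ N-2, z(i) = z(N) + Σ_{j=i+2}^{N} [ (1 - (-γ)^{j-i})/(1+γ) · Δf(j) - (γ + (-γ)^{j-i})/(1+γ) · Δb(j-1) ] + Δf(i+1). (Assume γ ≠ -1, which holds since γ ∈ [0,1].) -/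
open Finset

private noncomputable def bT {V : Type*} [AddCommGroup V] [Module ℝ V]
    (Δf Δb : ℕ → V) (γ : ℝ) (i j : ℕ) : V :=
  ((1 - (-γ) ^ (j - i)) / (1 + γ)) • Δf j - ((γ + (-γ) ^ (j - i)) / (1 + γ)) • Δb (j - 1)

private lemma bdia_key {V : Type*} [AddCommGroup V] [Module ℝ V]
    (Δf Δb : ℕ → V) (γ : ℝ) (hγ0 : 0 ≤ γ)
    (N : ℕ) (hN : 2 ≤ N) (z : ℕ → V)
    (hinit : z (N - 1) = z N + Δf N)
    (hrec : ∀ i, 1 ≤ i → i ≤ N - 1 →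
      z (i - 1) = z (i + 1) - (1 - γ) • (z (i + 1) - z i) - γ • Δb i + Δf i) :
    ∀ k i, i + k = N - 1 →
      z i = z N + (∑ j ∈ Icc (i + 2) N, bT Δf Δb γ i j) + Δf (i + 1) := by
  have h1γ : (1 : ℝ) + γ ≠ 0 := by positivity
  -- coefficient recurrences
  have hc : ∀ m : ℕ, (1 - (-γ) ^ (m + 2)) / (1 + γ)
      = γ * ((1 - (-γ) ^ m) / (1 + γ)) + (1 - γ) * ((1 - (-γ) ^ (m + 1)) / (1 + γ)) := by
    intro m; field_simp; ring
  have hd : ∀ m : ℕ, (γ + (-γ) ^ (m + 2)) / (1 + γ)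
      = γ * ((γ + (-γ) ^ m) / (1 + γ)) + (1 - γ) * ((γ + (-γ) ^ (m + 1)) / (1 + γ)) := by
    intro m; field_simp; ring
  -- pointwise identity for the inner sums
  have hT : ∀ i j : ℕ, i + 4 ≤ j →
      bT Δf Δb γ i j = γ • bT Δf Δb γ (i + 2) j + (1 - γ) • bT Δf Δb γ (i + 1) j := by
    intro i j hij
    obtain ⟨e, rfl⟩ : ∃ e, j = i + 4 + e := ⟨j - (i + 4), by omega⟩
    have e1 : i + 4 + e - i = e + 2 + 2 := by omega
    have e2 : i + 4 + e - (i + 1) = e + 2 + 1 := by omega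
    have e3 : i + 4 + e - (i + 2) = e + 2 := by omega
    simp only [bT, e1, e2, e3, hc, hd]
    module
  have hc2 : (1 - (-γ) ^ 2) / (1 + γ) = 1 - γ := by field_simp; ring
  have hd2 : (γ + (-γ) ^ 2) / (1 + γ) = γ := by field_simp
  have hc3 : (1 - (-γ) ^ 3) / (1 + γ) = 1 - γ + γ ^ 2 := by field_simp; ring
  have hd3 : (γ + (-γ) ^ 3) / (1 + γ) = γ - γ ^ 2 := by field_simp; ring
  intro k
  induction k using Nat.strong_induction_on with
  | _ k ih =>
    intro i hi
    match k, hi with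
    | 0, hi =>
      have hiN : i = N - 1 := by omega
      subst hiN
      have hempty : Icc (N - 1 + 2) N = ∅ := Icc_eq_empty (by omega)
      have hNi : N - 1 + 1 = N := by omega
      rw [hempty, hNi, Finset.sum_empty, add_zero]
      exact hinit
    | 1, hi =>
      have hiN : i = N - 2 := by omega
      subst hiN
      have hr := hrec (N - 1) (by omega) (by omega)
      have e1 : N - 1 - 1 = N - 2 := by omega
      have e2 : N - 1 + 1 = N := by omega
      have e3 : N - 2 + 2 = N := by omega
      have e4 : N - 2 + 1 = N - 1 := by omega
      have e5 : N - (N - 2) = 2 := by omega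
      rw [e1, e2, hinit] at hr
      rw [e3, e4, Finset.Icc_self, Finset.sum_singleton, hr]
      simp only [bT, e5, hc2, hd2, e4]
      module
    | (k + 2), hi =>
      have h1 := ih (k + 1) (by omega) (i + 1) (by omega)
      have h2 := ih k (by omega) (i + 2) (by omega)
      have hr := hrec (i + 1) (by omega) (by omega)
      have e1 : i + 1 - 1 = i := by omega
      have e2 : i + 1 + 1 = i + 2 := by omega
      rw [e1, e2] at hr
      have hiN : i + 4 ≤ N + 1 := by omega
      -- split sums
      have hins1 : Icc (i + 2) N = insert (i + 2) (Icc (i + 3) N) := by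
        ext x; simp [Finset.mem_Icc]; omega
      have hins2 : Icc (i + 3) N = insert (i + 3) (Icc (i + 4) N) := by
        ext x; simp [Finset.mem_Icc]; omega
      have hnm1 : (i + 2) ∉ Icc (i + 3) N := by simp
      have hnm2 : (i + 3) ∉ Icc (i + 4) N := by simp
      have hsum0 : ∑ j ∈ Icc (i + 4) N, bT Δf Δb γ i j
          = γ • (∑ j ∈ Icc (i + 4) N, bT Δf Δb γ (i + 2) j)
            + (1 - γ) • (∑ j ∈ Icc (i + 4) N, bT Δf Δb γ (i + 1) j) := by
        rw [Finset.smul_sum, Finset.smul_sum, ← Finset.sum_add_distrib]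
        exact Finset.sum_congr rfl fun j hj => hT i j (by simp [Finset.mem_Icc] at hj; omega)
      have hS : ∑ j ∈ Icc (i + 2) N, bT Δf Δb γ i j
          = bT Δf Δb γ i (i + 2) + bT Δf Δb γ i (i + 3)
            + (γ • (∑ j ∈ Icc (i + 4) N, bT Δf Δb γ (i + 2) j)
               + (1 - γ) • (∑ j ∈ Icc (i + 4) N, bT Δf Δb γ (i + 1) j)) := by
        rw [hins1, Finset.sum_insert hnm1, hins2, Finset.sum_insert hnm2, hsum0]
        abel
      have hS1 : ∑ j ∈ Icc (i + 3) N, bT Δf Δb γ (i + 1) j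
          = bT Δf Δb γ (i + 1) (i + 3) + ∑ j ∈ Icc (i + 4) N, bT Δf Δb γ (i + 1) j := by
        rw [hins2, Finset.sum_insert hnm2]
      -- rewrite the closed forms at i+1 and i+2
      have f1 : i + 1 + 2 = i + 3 := by omega
      have f2 : i + 2 + 2 = i + 4 := by omega
      have f3 : i + 1 + 1 = i + 2 := by omega
      have f4 : i + 2 + 1 = i + 3 := by omega
      rw [f1, f3, hS1] at h1
      rw [f2, f4] at h2
      rw [hr, h1, h2, hS]
      -- boundary coefficient values
      have g1 : i + 2 - i = 2 := by omega
      have g2 : i + 3 - i = 3 := by omega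
      have g3 : i + 3 - (i + 1) = 2 := by omega
      have g4 : i + 2 - 1 = i + 1 := by omega
      have g5 : i + 3 - 1 = i + 2 := by omega
      simp only [bT, g1, g2, g3, g4, g5, hc2, hd2, hc3, hd3]
      module

/-- Proposition 1 of the BDIA paper: closed form of the BDIA recursion. -/
theorem bdia_prop1 {V : Type*} [AddCommGroup V] [Module ℝ V]
    (Δf Δb : ℕ → V) (γ : ℝ) (hγ0 : 0 ≤ γ) (hγ1 : γ ≤ 1) (hγ : γ ≠ -1)
    (N : ℕ) (hN : 2 ≤ N) (z : ℕ → V)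
    (hinit : z (N - 1) = z N + Δf N)
    (hrec : ∀ i, 1 ≤ i → i ≤ N - 1 →
      z (i - 1) = z (i + 1) - (1 - γ) • (z (i + 1) - z i) - γ • Δb i + Δf i) :
    ∀ i, i ≤ N - 2 →
      z i = z N
        + (∑ j ∈ Finset.Icc (i + 2) N,
            (((1 - (-γ) ^ (j - i)) / (1 + γ)) • Δf j
              - ((γ + (-γ) ^ (j - i)) / (1 + γ)) • Δb (j - 1)))
        + Δf (i + 1) := by
  intro i hi
  have := bdia_key Δf Δb γ hγ0 N hN z hinit hrec (N - 1 - i) i (by omega)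
  simpa [bT] using this
end

section
/- Let V be a real vector space, and let Δf, Δb : ℕ → V. Define z : ℕ → V (indexed from N downward) by z(N) given, z(N-1) = z(N) + Δf(N), and z(i-1) = z(i+1) - Δb(i) + Δf(i) for i ≤ N-1 (the BDIA recursion with γ = 1). Then for all i ≤ N-1, z(i) = z(N) + Δf(N)·[(N-i) mod 2] + Σ_{j=i+1}^{N-1} ( -Δb(j) + Δf(j) )·[(j-i) mod 2], where [k mod 2] ∈ {0,1} denotes the parity indicator. -/
/-- Equation (21) of the BDIA paper: the γ = 1 closed form with parity indicators. -/
theorem bdia_gamma_one_closed_form {V : Type*} [AddCommGroup V] [Module ℝ V]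
    (Δf Δb : ℕ → V) (N : ℕ) (hN : 2 ≤ N) (z : ℕ → V)
    (hinit : z (N - 1) = z N + Δf N)
    (hrec : ∀ i, 1 ≤ i → i ≤ N - 1 → z (i - 1) = z (i + 1) - Δb i + Δf i) :
    ∀ i, i ≤ N - 1 →
      z i = z N + ((N - i) % 2) • Δf N
        + ∑ j ∈ Finset.Icc (i + 1) (N - 1), ((j - i) % 2) • (-Δb j + Δf j) := by
  have key : ∀ d : ℕ, ∀ i, i ≤ N - 1 → N - 1 - i = d →
      z i = z N + ((N - i) % 2) • Δf N
        + ∑ j ∈ Finset.Icc (i + 1) (N - 1), ((j - i) % 2) • (-Δb j + Δf j) := by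
    intro d
    induction d using Nat.strong_induction_on with
    | _ d IH =>
      intro i hi hd
      match d, IH with
      | 0, _ =>
        obtain rfl : i = N - 1 := by omega
        have h1 : N - (N - 1) = 1 := by omega
        have h2 : Finset.Icc (N - 1 + 1) (N - 1) = ∅ := by
          apply Finset.Icc_eq_empty; omega
        rw [hinit, h1, h2]
        simp
      | 1, _ =>
        obtain rfl : i = N - 2 := by omega
        have hr := hrec (N - 1) (by omega) le_rfl
        have e1 : N - 1 - 1 = N - 2 := by omega
        have e2 : N - 1 + 1 = N := by omega
        rw [e1, e2] at hr
        have h1 : (N - (N - 2)) % 2 = 0 := by omega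
        have h2 : Finset.Icc (N - 2 + 1) (N - 1) = {N - 1} := by
          ext j; simp [Finset.mem_Icc]; omega
        have h3 : (N - 1 - (N - 2)) % 2 = 1 := by omega
        rw [hr, h1, h2, Finset.sum_singleton, h3]
        simp
        abel
      | (k + 2), IH =>
        have hi2 : i + 2 ≤ N - 1 := by omega
        have ih := IH k (by omega) (i + 2) hi2 (by omega)
        have hr := hrec (i + 1) (by omega) (by omega)
        have e1 : i + 1 - 1 = i := by omega
        have e2 : i + 1 + 1 = i + 2 := by omega
        rw [e1, e2] at hr
        have hmod : (N - i) % 2 = (N - (i + 2)) % 2 := by omega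
        have hins : Finset.Icc (i + 1) (N - 1)
            = insert (i + 1) (insert (i + 2) (Finset.Icc (i + 3) (N - 1))) := by
          ext j; simp [Finset.mem_Icc, Finset.mem_insert]; omega
        have hnm1 : (i + 1) ∉ insert (i + 2) (Finset.Icc (i + 3) (N - 1)) := by
          simp [Finset.mem_Icc]
        have hnm2 : (i + 2) ∉ Finset.Icc (i + 3) (N - 1) := by
          simp [Finset.mem_Icc]
        have hsum : ∀ j ∈ Finset.Icc (i + 3) (N - 1),
            ((j - i) % 2) • (-Δb j + Δf j) = ((j - (i + 2)) % 2) • (-Δb j + Δf j) := by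
          intro j hj
          simp only [Finset.mem_Icc] at hj
          congr 1
          omega
        rw [hins, Finset.sum_insert hnm1, Finset.sum_insert hnm2,
          Finset.sum_congr rfl hsum]
        have t1 : (i + 1 - i) % 2 = 1 := by omega
        have t2 : (i + 2 - i) % 2 = 0 := by omega
        rw [t1, t2, hr, ih, hmod]
        have h3 : Finset.Icc (i + 2 + 1) (N - 1) = Finset.Icc (i + 3) (N - 1) := by
          norm_num
        rw [h3]
        simp
        abel
  intro i hi
  exact key (N - 1 - i) i hi rfl
end

section
/- Let V be a real vector space, γ₁, γ₂ ∈ ℝ with γ₁ ≠ γ₂, and let Φ, Ψ : V → V be arbitrary maps. Define one CBDIA step on a pair (z, y): w = z + Φ(y); v = y - Ψ(w); z_out = γ₁ w + (1-γ₁) v; y_out = γ₂ w + (1-γ₂) v. Then (z, y) can be recovered exactly from (z_out, y_out) via: v = (γ₁ y_out - γ₂ z_out)/(γ₁ - γ₂); w = ((1-γ₁) y_out - (1-γ₂) z_out)/(γ₂ - γ₁); y = v + Ψ(w); z = w - Φ(y). In particular, the CBDIA step is injective. -/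
/-- Exact inversion of one CBDIA step (Appendix B of the BDIA paper). -/
theorem cbdia_exact_inversion {V : Type*} [AddCommGroup V] [Module ℝ V]
    (γ₁ γ₂ : ℝ) (h : γ₁ ≠ γ₂) (Φ Ψ : V → V)
    (step : V × V → V × V)
    (hstep : ∀ z y : V,
      step (z, y) =
        (γ₁ • (z + Φ y) + (1 - γ₁) • (y - Ψ (z + Φ y)),
         γ₂ • (z + Φ y) + (1 - γ₂) • (y - Ψ (z + Φ y)))) :
    (∀ z y : V,
      let zo := (step (z, y)).1
      let yo := (step (z, y)).2
      let v := (γ₁ - γ₂)⁻¹ • (γ₁ • yo - γ₂ • zo)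
      let w := (γ₂ - γ₁)⁻¹ • ((1 - γ₁) • yo - (1 - γ₂) • zo)
      let yr := v + Ψ w
      let zr := w - Φ yr
      yr = y ∧ zr = z) ∧
    Function.Injective step := by
  have hne : γ₁ - γ₂ ≠ 0 := sub_ne_zero.mpr h
  have hne' : γ₂ - γ₁ ≠ 0 := sub_ne_zero.mpr (Ne.symm h)
  have hw : ∀ z y : V,
      (γ₂ - γ₁)⁻¹ • ((1 - γ₁) • (step (z, y)).2 - (1 - γ₂) • (step (z, y)).1)
        = z + Φ y := by
    intro z y
    rw [hstep]
    match_scalars <;> field_simp <;> ring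
  have hv : ∀ z y : V,
      (γ₁ - γ₂)⁻¹ • (γ₁ • (step (z, y)).2 - γ₂ • (step (z, y)).1)
        = y - Ψ (z + Φ y) := by
    intro z y
    rw [hstep]
    match_scalars <;> field_simp <;> ring
  have hrec : ∀ z y : V,
      (γ₁ - γ₂)⁻¹ • (γ₁ • (step (z, y)).2 - γ₂ • (step (z, y)).1) +
        Ψ ((γ₂ - γ₁)⁻¹ • ((1 - γ₁) • (step (z, y)).2 - (1 - γ₂) • (step (z, y)).1)) = y ∧
      (γ₂ - γ₁)⁻¹ • ((1 - γ₁) • (step (z, y)).2 - (1 - γ₂) • (step (z, y)).1) -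
        Φ ((γ₁ - γ₂)⁻¹ • (γ₁ • (step (z, y)).2 - γ₂ • (step (z, y)).1) +
          Ψ ((γ₂ - γ₁)⁻¹ • ((1 - γ₁) • (step (z, y)).2 - (1 - γ₂) • (step (z, y)).1))) = z := by
    intro z y
    rw [hw, hv]
    constructor
    · abel
    · rw [sub_add_cancel]
      abel
  refine ⟨fun z y => hrec z y, ?_⟩
  intro p q hpq
  obtain ⟨z, y⟩ := p
  obtain ⟨z', y'⟩ := q
  obtain ⟨hy1, hz1⟩ := hrec z y
  obtain ⟨hy2, hz2⟩ := hrec z' y'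
  rw [hpq] at hy1 hz1
  have e1 : z = z' := hz1.symm.trans hz2
  have e2 : y = y' := hy1.symm.trans hy2
  rw [e1, e2]
end

section
/- Let V be a real vector space, and let Φ, Ψ : ℕ → V → V. Define sequences z, y : ℕ → V (indexed from N downward) with z(N) = y(N), and for i ≤ N: y(i-1) = z(i) + Φ(i)(y(i)) and z(i-1) = y(i) - Ψ(i-1)(y(i-1)) (CBDIA with (γ₁, γ₂) = (0,1)). Then for all i < N-1, y(i-1) = y(i+1) - Ψ(i)(y(i)) + Φ(i)(y(i)). That is, the y-sequence of CBDIA with (γ₁,γ₂) = (0,1) satisfies exactly the BDIA recursion with γ = 1. -/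
/-- CBDIA with (γ₁, γ₂) = (0, 1) reduces to the BDIA recursion with γ = 1
(Appendix B.2 of the BDIA paper). -/
theorem cbdia_reduces_to_bdia {V : Type*} [AddCommGroup V] [Module ℝ V]
    (Φ Ψ : ℕ → V → V) (N : ℕ) (z y : ℕ → V)
    (hinit : z N = y N)
    (hrec : ∀ i, 1 ≤ i → i ≤ N →
      y (i - 1) = z i + Φ i (y i) ∧ z (i - 1) = y i - Ψ (i - 1) (y (i - 1))) :
    ∀ i, 1 ≤ i → i < N - 1 →
      y (i - 1) = y (i + 1) - Ψ i (y i) + Φ i (y i) := by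
  intro i hi hiN
  have h1 : i + 1 ≤ N := by omega
  obtain ⟨hy, _⟩ := hrec i hi (by omega)
  obtain ⟨_, hz⟩ := hrec (i + 1) (by omega) h1
  simp only [Nat.add_sub_cancel] at hz
  rw [hy, hz]
end
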